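/- Under the BC-RED assumptions, let x* ∈ zer(G), let i ∈ {1,…,b}, and let x⁺ = x − γ U_i G_i(x) be a single BC-RED update with step-size 0 < γ ≤ 1/(L_max + 2τ). If additionally x − x* is supported on block i (i.e., x = x* + U_i h_i for some h_i ∈ ℝ^{n_i}), then ‖x⁺ − x*‖² ≤ ‖x − x*‖² − (γ/(L_max + 2τ)) ‖G_i(x)‖². -/

import Mathlib

/-!
Write `x = x* + U_i h` and `q = G_i(x)`. Since `G_i(x*) = 0`, the update moves `h` to `h - γ q`
inside block `i`, and `‖h - γ q‖² = ‖h‖² - 2γ⟪q, h⟫ + γ²‖q‖²`; so it suffices that `G_i` is block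
`β`-cocoercive with `β = 1/(L_max + 2τ) ≥ γ`. This holds because `∇_i g` is `1/L_max`-cocoercive
(Baillon–Haddad for the restriction `u ↦ g(y + U_i u)`), `I - D_i` is `1/2`-cocoercive (`D_i` is
nonexpansive), and cocoercivity constants scale as `β/c` under multiplication by `c > 0` and
combine as `(β₁⁻¹ + β₂⁻¹)⁻¹` under sums.
-/

open scoped RealInnerProductSpace BigOperators

noncomputable section

/-- The `i`-th block of `ℝ^n = ℝ^{n 0} × ⋯ × ℝ^{n (b-1)}`. -/
abbrev Blk {b : ℕ} (n : Fin b → ℕ) (i : Fin b) := EuclideanSpace ℝ (Fin (n i))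

/-- The full space `ℝ^n` decomposed into `b` blocks. -/
abbrev FullSpace {b : ℕ} (n : Fin b → ℕ) := PiLp 2 fun i => Blk n i

/-- `U_i : ℝ^{n_i} → ℝ^n`, the injection of the `i`-th block (zero elsewhere). -/
noncomputable def blockInj {b : ℕ} (n : Fin b → ℕ) (i : Fin b) (h : Blk n i) :
    FullSpace n := WithLp.toLp 2 (Pi.single i h)

/-- `U_iᵀ : ℝ^n → ℝ^{n_i}`, extraction of the `i`-th block. -/
def blockExt {b : ℕ} (n : Fin b → ℕ) (i : Fin b) (x : FullSpace n) : Blk n i := x i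

/-- `T_i : ℝ^n → ℝ^{n_i}` is block Lipschitz continuous with constant `lam`:
`‖T_i(y + U_i h) − T_i(y)‖ ≤ lam * ‖h‖` for all `y ∈ ℝ^n`, `h ∈ ℝ^{n_i}`.
Block nonexpansive means `lam = 1`. -/
def BlockLipschitz {b : ℕ} (n : Fin b → ℕ) (i : Fin b)
    (T : FullSpace n → Blk n i) (lam : ℝ) : Prop :=
  ∀ (y : FullSpace n) (h : Blk n i), ‖T (y + blockInj n i h) - T y‖ ≤ lam * ‖h‖

/-- `T_i : ℝ^n → ℝ^{n_i}` is block `β`-cocoercive: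
`⟨T_i(y + U_i h) − T_i(y), h⟩ ≥ β‖T_i(y + U_i h) − T_i(y)‖²`. -/
def BlockCocoercive {b : ℕ} (n : Fin b → ℕ) (i : Fin b)
    (T : FullSpace n → Blk n i) (β : ℝ) : Prop :=
  ∀ (y : FullSpace n) (h : Blk n i),
    β * ‖T (y + blockInj n i h) - T y‖ ^ 2 ≤ ⟪T (y + blockInj n i h) - T y, h⟫

open Set
open scoped NNReal

theorem inv_add_inv_inv_mul_norm_add_sq_le {E : Type*} [SeminormedAddCommGroup E] {β₁ β₂ : ℝ}
    (h₁ : 0 < β₁) (h₂ : 0 < β₂) (p q : E) :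
    (β₁⁻¹ + β₂⁻¹)⁻¹ * ‖p + q‖ ^ 2 ≤ β₁ * ‖p‖ ^ 2 + β₂ * ‖q‖ ^ 2 := by
  have hβ : (β₁⁻¹ + β₂⁻¹)⁻¹ = β₁ * β₂ / (β₁ + β₂) := by field_simp; ring
  have htri : ‖p + q‖ ^ 2 ≤ (‖p‖ + ‖q‖) ^ 2 := by gcongr; exact norm_add_le p q
  rw [hβ, div_mul_eq_mul_div, div_le_iff₀ (by positivity)]
  nlinarith [sq_nonneg (β₁ * ‖p‖ - β₂ * ‖q‖),
    mul_le_mul_of_nonneg_left htri (by positivity : 0 ≤ β₁ * β₂)]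

theorem norm_sub_smul_sq_le_of_inner {E : Type*} [NormedAddCommGroup E] [InnerProductSpace ℝ E]
    {h q : E} {β γ : ℝ} (hγ : 0 ≤ γ) (hγβ : γ ≤ β) (hq : β * ‖q‖ ^ 2 ≤ ⟪q, h⟫) :
    ‖h - γ • q‖ ^ 2 ≤ ‖h‖ ^ 2 - γ * β * ‖q‖ ^ 2 := by
  rw [norm_sub_sq_real, real_inner_smul_right, norm_smul, Real.norm_of_nonneg hγ, real_inner_comm]
  nlinarith [mul_le_mul_of_nonneg_left hq hγ,
    mul_le_mul_of_nonneg_left hγβ (mul_nonneg hγ (sq_nonneg ‖q‖))]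

section GradientInequalities

variable {E : Type*} [NormedAddCommGroup E] [InnerProductSpace ℝ E] [CompleteSpace E]
  {f : E → ℝ} {f' : E → E}

theorem HasGradientAt.hasDerivAt_comp_add_smul {u w g : E} {t : ℝ}
    (hf : HasGradientAt f g (u + t • w)) :
    HasDerivAt (fun s : ℝ => f (u + s • w)) ⟪g, w⟫ t := by
  have hline : HasDerivAt (fun s : ℝ => u + s • w) w t := by
    simpa using ((hasDerivAt_id t).smul_const w).const_add u
  exact hf.hasFDerivAt.comp_hasDerivAt t hline

theorem ConvexOn.add_inner_le_of_hasGradientAt (hf : ConvexOn ℝ univ f) {u g : E}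
    (hg : HasGradientAt f g u) (v : E) : f u + ⟪g, v - u⟫ ≤ f v := by
  have hline : ConvexOn ℝ univ (fun s : ℝ => f (u + s • (v - u))) := by
    simpa [Function.comp_def, AffineMap.lineMap_apply, add_comm]
      using hf.comp_affineMap (AffineMap.lineMap u v)
  have hderiv : HasDerivAt (fun s : ℝ => f (u + s • (v - u))) ⟪g, v - u⟫ 0 :=
    HasGradientAt.hasDerivAt_comp_add_smul (by simpa using hg)
  have hslope := hline.le_slope_of_hasDerivAt (mem_univ 0) (mem_univ 1) one_pos hderiv
  simp only [slope_def_field, one_smul, zero_smul, add_zero, add_sub_cancel, sub_zero,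
    div_one] at hslope
  linarith

theorem LipschitzWith.le_add_inner_add_sq {K : ℝ≥0} (hK : LipschitzWith K f')
    (hf : ∀ x, HasGradientAt f (f' x) x) (u v : E) :
    f v ≤ f u + ⟪f' u, v - u⟫ + K / 2 * ‖v - u‖ ^ 2 := by
  set w := v - u
  let χ : ℝ → ℝ := fun t => f (u + t • w) - t * ⟪f' u, w⟫ - K / 2 * t ^ 2 * ‖w‖ ^ 2
  have hχ : ∀ t, HasDerivAt χ (⟪f' (u + t • w) - f' u, w⟫ - K * t * ‖w‖ ^ 2) t := by
    intro t
    have := (((hf (u + t • w)).hasDerivAt_comp_add_smul (u := u)).sub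
      ((hasDerivAt_id t).mul_const ⟪f' u, w⟫)).sub
      (((hasDerivAt_pow 2 t).const_mul (K / 2 : ℝ)).mul_const (‖w‖ ^ 2))
    refine this.congr_deriv ?_
    simp only [inner_sub_left]
    ring
  have hχ_nonpos :
      ∀ t ∈ interior (Ici (0 : ℝ)), ⟪f' (u + t • w) - f' u, w⟫ - K * t * ‖w‖ ^ 2 ≤ 0 := by
    intro t ht
    rw [interior_Ici] at ht
    have := calc
      ⟪f' (u + t • w) - f' u, w⟫ ≤ ‖f' (u + t • w) - f' u‖ * ‖w‖ := real_inner_le_norm _ _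
      _ ≤ K * ‖u + t • w - u‖ * ‖w‖ := by gcongr; exact hK.norm_sub_le _ _
      _ = K * t * ‖w‖ ^ 2 := by
        rw [add_sub_cancel_left, norm_smul, Real.norm_of_nonneg ht.le]; ring
    linarith
  have hanti := antitoneOn_of_hasDerivWithinAt_nonpos (convex_Ici 0)
    (fun t _ => (hχ t).continuousAt.continuousWithinAt) (fun t _ => (hχ t).hasDerivWithinAt)
    hχ_nonpos self_mem_Ici (mem_Ici.2 zero_le_one) zero_le_one
  simp only [χ, w, zero_smul, add_zero, one_smul, add_sub_cancel] at hanti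
  linarith

/- Descent from `v` by the gradient step `w = v - K⁻¹ (f' v - f' u)`, combined with the
first-order convexity bound at `u` evaluated at `w`. -/
theorem ConvexOn.add_inner_add_sq_le_of_lipschitzWith (hconv : ConvexOn ℝ univ f) {K : ℝ≥0}
    (hK : LipschitzWith K f') (hf : ∀ x, HasGradientAt f (f' x) x) (u v : E) :
    f u + ⟪f' u, v - u⟫ + (2 * K : ℝ)⁻¹ * ‖f' v - f' u‖ ^ 2 ≤ f v := by
  set e := f' v - f' u
  set w := v - (K : ℝ)⁻¹ • e
  have h₁ := hconv.add_inner_le_of_hasGradientAt (hf u) w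
  have h₂ := hK.le_add_inner_add_sq hf v w
  have hwv : w - v = -((K : ℝ)⁻¹ • e) := by simp [w]
  have hwu : w - u = (v - u) - (K : ℝ)⁻¹ • e := by simp only [w]; abel
  rw [hwu, inner_sub_right, real_inner_smul_right] at h₁
  rw [hwv, inner_neg_right, real_inner_smul_right, norm_neg, norm_smul,
    Real.norm_of_nonneg (by positivity)] at h₂
  have he : (K : ℝ)⁻¹ * ⟪f' v, e⟫ - (K : ℝ)⁻¹ * ⟪f' u, e⟫ = (K : ℝ)⁻¹ * ‖e‖ ^ 2 := by
    rw [← mul_sub, ← inner_sub_left, real_inner_self_eq_norm_sq]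
  have hquad : (K : ℝ) / 2 * ((K : ℝ)⁻¹ * ‖e‖) ^ 2 = (2 * K : ℝ)⁻¹ * ‖e‖ ^ 2 := by
    rcases eq_or_ne (K : ℝ) 0 with hK0 | hK0
    · simp [hK0]
    · field_simp
  have hhalf : (K : ℝ)⁻¹ * ‖e‖ ^ 2 = 2 * ((2 * K : ℝ)⁻¹ * ‖e‖ ^ 2) := by
    rw [mul_inv]; ring
  linarith

/- Baillon–Haddad. -/
theorem ConvexOn.inv_mul_norm_sub_sq_le_inner (hconv : ConvexOn ℝ univ f) {K : ℝ≥0}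
    (hK : LipschitzWith K f') (hf : ∀ x, HasGradientAt f (f' x) x) (u v : E) :
    (K : ℝ)⁻¹ * ‖f' u - f' v‖ ^ 2 ≤ ⟪f' u - f' v, u - v⟫ := by
  have h₁ := hconv.add_inner_add_sq_le_of_lipschitzWith hK hf u v
  have h₂ := hconv.add_inner_add_sq_le_of_lipschitzWith hK hf v u
  rw [norm_sub_rev] at h₁
  have hinner : ⟪f' u - f' v, u - v⟫ = -⟪f' u, v - u⟫ - ⟪f' v, u - v⟫ := by
    simp only [inner_sub_left, inner_sub_right]; ring
  have hhalf : (K : ℝ)⁻¹ = (2 * K : ℝ)⁻¹ + (2 * K : ℝ)⁻¹ := by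
    rw [mul_inv]; ring
  rw [hinner, hhalf]
  linarith

end GradientInequalities

section Blocks

variable {b : ℕ} {n : Fin b → ℕ} {i : Fin b}

def blockInjCLM (n : Fin b → ℕ) (i : Fin b) : Blk n i →L[ℝ] FullSpace n :=
  (PiLp.continuousLinearEquiv 2 ℝ (Blk n)).symm.toContinuousLinearMap ∘L
    ContinuousLinearMap.single ℝ (Blk n) i

theorem blockInjCLM_apply (u : Blk n i) : blockInjCLM n i u = blockInj n i u := rfl

@[simp]
theorem blockInj_zero : blockInj n i 0 = 0 := map_zero (blockInjCLM n i)

theorem blockInj_sub (u v : Blk n i) :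
    blockInj n i (u - v) = blockInj n i u - blockInj n i v :=
  map_sub (blockInjCLM n i) u v

theorem blockInj_smul (c : ℝ) (u : Blk n i) : blockInj n i (c • u) = c • blockInj n i u :=
  map_smul (blockInjCLM n i) c u

theorem norm_blockInj (u : Blk n i) : ‖blockInj n i u‖ = ‖u‖ :=
  PiLp.norm_single 2 (Blk n) i u

theorem inner_blockInj (u : Blk n i) (z : FullSpace n) :
    ⟪blockInj n i u, z⟫ = ⟪u, blockExt n i z⟫ := by
  rw [PiLp.inner_apply, Finset.sum_eq_single i]
  · simp [blockInj, blockExt]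
  · intro j _ hj
    simp [blockInj, Pi.single_eq_of_ne hj]
  · simp

theorem blockExt_add_blockInj (y : FullSpace n) (u : Blk n i) :
    blockExt n i (y + blockInj n i u) = blockExt n i y + u := by
  simp [blockExt, blockInj]

theorem HasGradientAt.comp_add_blockInj {g : FullSpace n → ℝ} {g' y : FullSpace n}
    {u : Blk n i} (hg : HasGradientAt g g' (y + blockInj n i u)) :
    HasGradientAt (fun v => g (y + blockInj n i v)) (blockExt n i g') u := by
  rw [hasGradientAt_iff_hasFDerivAt] at hg ⊢
  have hinj : HasFDerivAt (fun v => y + blockInj n i v) (blockInjCLM n i) u :=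
    (blockInjCLM n i).hasFDerivAt.const_add y
  refine (hg.comp u hinj).congr_fderiv (ContinuousLinearMap.ext fun v => ?_)
  simp only [InnerProductSpace.toDual_apply_apply, ContinuousLinearMap.coe_comp,
    Function.comp_apply, blockInjCLM_apply]
  rw [real_inner_comm, inner_blockInj, real_inner_comm]

theorem blockCocoercive_blockGradient {g : FullSpace n → ℝ} (hconv : ConvexOn ℝ univ g)
    (hdiff : Differentiable ℝ g) {L : ℝ} (hL : 0 ≤ L)
    (hlip : BlockLipschitz n i (fun x => blockExt n i (gradient g x)) L) :
    BlockCocoercive n i (fun x => blockExt n i (gradient g x)) L⁻¹ := by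
  intro y h
  set φ' : Blk n i → Blk n i := fun u => blockExt n i (gradient g (y + blockInj n i u))
  have hφ : ∀ u, HasGradientAt (fun v => g (y + blockInj n i v)) (φ' u) u := fun u =>
    (hdiff _).hasGradientAt.comp_add_blockInj
  have hφconv : ConvexOn ℝ univ (fun v => g (y + blockInj n i v)) := by
    have := (hconv.translate_right y).comp_linearMap (blockInjCLM n i).toLinearMap
    rw [preimage_univ, preimage_univ] at this
    exact this
  have hφlip : LipschitzWith L.toNNReal φ' := by
    refine LipschitzWith.of_dist_le_mul fun u v => ?_
    have hshift : y + blockInj n i u = (y + blockInj n i v) + blockInj n i (u - v) := by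
      rw [blockInj_sub]; abel
    simpa [dist_eq_norm, φ', hshift, Real.coe_toNNReal L hL] using hlip (y + blockInj n i v) (u - v)
  simpa [φ', Real.coe_toNNReal L hL] using hφconv.inv_mul_norm_sub_sq_le_inner hφlip hφ h 0

theorem BlockLipschitz.blockCocoercive_blockExt_sub {D : FullSpace n → Blk n i}
    (hD : BlockLipschitz n i D 1) :
    BlockCocoercive n i (fun x => blockExt n i x - D x) 2⁻¹ := by
  intro y h
  set d := D (y + blockInj n i h) - D y
  have hd : ‖d‖ ^ 2 ≤ ‖h‖ ^ 2 := by
    have := hD y h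
    rw [one_mul] at this
    gcongr
  have hdiff : blockExt n i (y + blockInj n i h) - D (y + blockInj n i h)
      - (blockExt n i y - D y) = h - d := by
    rw [blockExt_add_blockInj]; simp only [d]; abel
  rw [hdiff, norm_sub_sq_real, inner_sub_left, real_inner_self_eq_norm_sq, real_inner_comm]
  linarith

theorem BlockCocoercive.const_smul {T : FullSpace n → Blk n i} {β c : ℝ}
    (hT : BlockCocoercive n i T β) (hc : 0 < c) : BlockCocoercive n i (c • T) (β / c) := by
  intro y h
  simp only [Pi.smul_apply, ← smul_sub, norm_smul, Real.norm_of_nonneg hc.le,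
    real_inner_smul_left]
  calc β / c * (c * ‖T (y + blockInj n i h) - T y‖) ^ 2
      = c * (β * ‖T (y + blockInj n i h) - T y‖ ^ 2) := by field_simp
    _ ≤ _ := by gcongr; exact hT y h

theorem BlockCocoercive.add {T S : FullSpace n → Blk n i} {β₁ β₂ : ℝ}
    (hT : BlockCocoercive n i T β₁) (hS : BlockCocoercive n i S β₂) (h₁ : 0 < β₁)
    (h₂ : 0 < β₂) : BlockCocoercive n i (T + S) (β₁⁻¹ + β₂⁻¹)⁻¹ := by
  intro y h
  simp only [Pi.add_apply, add_sub_add_comm, inner_add_left]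
  exact (inv_add_inv_inv_mul_norm_add_sq_le h₁ h₂ _ _).trans (add_le_add (hT y h) (hS y h))

end Blocks

/-- single BC-RED update decreases the squared distance to a fixed
point `x* ∈ zer(G)` when `x − x*` is supported on block `i`. -/
theorem bcred_single_update_decrease {b : ℕ} (n : Fin b → ℕ)
    (g : FullSpace n → ℝ) (D : FullSpace n → FullSpace n) (τ Lmax : ℝ)
    (hτ : 0 < τ) (hLmax : 0 < Lmax)
    (hg_conv : ConvexOn ℝ Set.univ g) (hg_diff : ContDiff ℝ 1 g)
    (hg_lip : ∀ i, BlockLipschitz n i (fun x => blockExt n i (gradient g x)) Lmax)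
    (hD : ∀ i, BlockLipschitz n i (fun x => blockExt n i (D x)) 1)
    (G : FullSpace n → FullSpace n)
    (hG : ∀ x, G x = gradient g x + τ • (x - D x))
    (xs : FullSpace n) (hxs : G xs = 0)
    (γ : ℝ) (hγ : 0 < γ) (hγ' : γ ≤ 1 / (Lmax + 2 * τ))
    (i : Fin b) (x : FullSpace n)
    (hsupp : ∃ hi : Blk n i, x = xs + blockInj n i hi) :
    ‖(x - γ • blockInj n i (blockExt n i (G x))) - xs‖ ^ 2
      ≤ ‖x - xs‖ ^ 2 - (γ / (Lmax + 2 * τ)) * ‖blockExt n i (G x)‖ ^ 2 := by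
  obtain ⟨h, rfl⟩ := hsupp
  have hGi : (fun x => blockExt n i (G x)) = (fun x => blockExt n i (gradient g x))
      + τ • fun x => blockExt n i x - blockExt n i (D x) := by
    funext x
    simp [hG, blockExt]
  have hco : BlockCocoercive n i (fun x => blockExt n i (G x)) (1 / (Lmax + 2 * τ)) := by
    have hsum := (blockCocoercive_blockGradient hg_conv (hg_diff.differentiable one_ne_zero)
      hLmax.le (hg_lip i)).add ((hD i).blockCocoercive_blockExt_sub.const_smul hτ)
      (inv_pos.2 hLmax) (by positivity)
    rw [hGi]
    convert hsum using 1
    field_simp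
  have hGxs : blockExt n i (G xs) = 0 := by rw [hxs]; rfl
  have hstep := hco xs h
  simp only [hGxs, sub_zero] at hstep
  rw [add_sub_cancel_left, ← blockInj_smul, add_sub_assoc, ← blockInj_sub, add_sub_cancel_left,
    norm_blockInj, norm_blockInj, ← mul_one_div]
  exact norm_sub_smul_sq_le_of_inner hγ.le hγ' hstep
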